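/- arXiv:1910.04050 — 6 statements merged into one kernel-verified Lean document; each statement's English description precedes it below -/
import Mathlib

section
/- Let A be an endomorphism of a finite-dimensional real vector space and c < 0. If for every t ∈ ℝ the operator J(t) = cosh(√(−c) t)·I − (sinh(√(−c) t)/√(−c))·A is invertible, then every real eigenvalue of A lies in the closed interval [−√(−c), √(−c)]. -/
/-! On an eigenvector `v` of `A` with eigenvalue `λ`, the operator `J(t)` acts as the scalar
`cosh(√(−c) t) − λ sinh(√(−c) t)/√(−c)`. If `|λ| > √(−c)`, this scalar vanishes at
`t = artanh(√(−c)/λ)/√(−c)`, so `J(t)` kills `v` and cannot be invertible. -/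

open Real

theorem Module.End.HasEigenvalue.sub_mul_ne_zero_of_isUnit {K V : Type*} [Field K]
    [AddCommGroup V] [Module K V] {A : Module.End K V} {μ : K} (hμ : A.HasEigenvalue μ)
    {a b : K} (hJ : IsUnit (a • 1 - b • A)) : a - b * μ ≠ 0 := by
  intro hzero
  obtain ⟨v, hv⟩ := hμ.exists_hasEigenvector
  have hJv : (a • 1 - b • A) v = 0 := by
    simp only [LinearMap.sub_apply, LinearMap.smul_apply, Module.End.one_apply,
      hv.apply_eq_smul, smul_smul, ← sub_smul, hzero, zero_smul]
  exact hv.2 (((Module.End.isUnit_iff _).mp hJ).injective (hJv.trans (map_zero _).symm))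

theorem Real.exists_cosh_sub_sinh_div_mul_eq_zero {s lam : ℝ} (hs : 0 < s) (hlam : s < |lam|) :
    ∃ t, cosh (s * t) - sinh (s * t) / s * lam = 0 := by
  have hlam0 : lam ≠ 0 := abs_pos.mp (hs.trans hlam)
  have hmem : s / lam ∈ Set.Ioo (-1) 1 := by
    rw [Set.mem_Ioo, ← abs_lt, abs_div, abs_of_pos hs, div_lt_one (hs.trans hlam)]
    exact hlam
  have hsinh := tanh_artanh hmem
  rw [tanh_eq_sinh_div_cosh, div_eq_iff (cosh_pos _).ne'] at hsinh
  refine ⟨artanh (s / lam) / s, ?_⟩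
  rw [mul_div_cancel₀ _ hs.ne', hsinh]
  field_simp
  ring

theorem stmt_3_general {V : Type*} [AddCommGroup V] [Module ℝ V]
    (A : Module.End ℝ V) (c : ℝ) (hc : c < 0)
    (hJ : ∀ t : ℝ,
      IsUnit (Real.cosh (Real.sqrt (-c) * t) • (1 : Module.End ℝ V)
        - (Real.sinh (Real.sqrt (-c) * t) / Real.sqrt (-c)) • A)) :
    ∀ lam : ℝ, Module.End.HasEigenvalue A lam →
      lam ∈ Set.Icc (-Real.sqrt (-c)) (Real.sqrt (-c)) := by
  intro lam hlam
  rw [Set.mem_Icc, ← abs_le]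
  by_contra! hout
  obtain ⟨t, ht⟩ := exists_cosh_sub_sinh_div_mul_eq_zero (sqrt_pos.mpr (neg_pos.mpr hc)) hout
  exact hlam.sub_mul_ne_zero_of_isUnit (hJ t) ht

/-- if `J(t) = cosh(√(−c) t)·I − (sinh(√(−c) t)/√(−c))·A` is invertible
for all `t ∈ ℝ` and `c < 0`, then every real eigenvalue of `A` lies in
`[−√(−c), √(−c)]`. -/
theorem stmt_3 {V : Type*} [AddCommGroup V] [Module ℝ V] [FiniteDimensional ℝ V]
    (A : Module.End ℝ V) (c : ℝ) (hc : c < 0)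
    (hJ : ∀ t : ℝ,
      IsUnit (Real.cosh (Real.sqrt (-c) * t) • (1 : Module.End ℝ V)
        - (Real.sinh (Real.sqrt (-c) * t) / Real.sqrt (-c)) • A)) :
    ∀ lam : ℝ, Module.End.HasEigenvalue A lam →
      lam ∈ Set.Icc (-Real.sqrt (-c)) (Real.sqrt (-c)) :=
  stmt_3_general A c hc hJ
end

section
/- Let c be a real number and let A : [0,b) → End(V) be a smooth family of endomorphisms of a finite-dimensional real vector space satisfying the Riccati equation A'(t) = A(t)² + c·I with initial condition A(0) = A₀. Let J(t) solve J''(t) + c·J(t) = 0 with J(0) = I, J'(0) = −A₀. Then J(t) is invertible for all t ∈ [0, b) and A(t) = −J'(t)·J(t)⁻¹. -/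
open Set

/-- A function whose derivative is linearly bounded by its norm and which vanishes at the
left endpoint vanishes identically (Grönwall). -/
lemma gronwall_zero' {E : Type*} [NormedAddCommGroup E] [NormedSpace ℝ E]
    {f f' : ℝ → E} {K a b : ℝ}
    (hd : ∀ t ∈ Set.Icc a b, HasDerivAt f (f' t) t)
    (hbnd : ∀ t ∈ Set.Icc a b, ‖f' t‖ ≤ K * ‖f t‖)
    (h0 : f a = 0) : ∀ t ∈ Set.Icc a b, f t = 0 := by
  have hcont : ContinuousOn f (Set.Icc a b) :=
    fun s hs => (hd s hs).continuousAt.continuousWithinAt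
  intro t ht
  have key := norm_le_gronwallBound_of_norm_deriv_right_le (δ := 0) (ε := 0) (K := K) hcont
    (fun s hs => (hd s (Set.mem_Icc_of_Ico hs)).hasDerivWithinAt)
    (by simp [h0])
    (fun s hs => by simpa using hbnd s (Set.mem_Icc_of_Ico hs)) t ht
  rw [gronwallBound_ε0_δ0] at key
  exact norm_le_zero_iff.mp key

/-- if `A` solves the Riccati equation `A' = A² + c·I` on `[0, b)` and
`J` solves `J'' + c·J = 0` with `J(0) = I`, `J'(0) = −A(0)`, then `J(t)` is
invertible on `[0, b)` and `A(t) = −J'(t)·J(t)⁻¹`. -/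
theorem stmt_5 {V : Type*} [NormedAddCommGroup V] [NormedSpace ℝ V]
    [FiniteDimensional ℝ V]
    (c b : ℝ) (hb : 0 < b)
    (A J J' : ℝ → (V →L[ℝ] V)) (A₀ : V →L[ℝ] V)
    (hA : ∀ t ∈ Set.Ico (0 : ℝ) b,
      HasDerivAt A (A t * A t + c • (1 : V →L[ℝ] V)) t)
    (hA0 : A 0 = A₀)
    (hJd : ∀ t ∈ Set.Ico (0 : ℝ) b, HasDerivAt J (J' t) t)
    (hJdd : ∀ t ∈ Set.Ico (0 : ℝ) b, HasDerivAt J' (-(c • J t)) t)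
    (hJ0 : J 0 = 1) (hJ'0 : J' 0 = -A₀) :
    ∀ t ∈ Set.Ico (0 : ℝ) b,
      IsUnit (J t) ∧ A t = -(J' t) * Ring.inverse (J t) := by
  intro t₀ ht₀
  obtain ⟨ht₀0, ht₀b⟩ := ht₀
  have hsub : Set.Icc (0 : ℝ) t₀ ⊆ Set.Ico (0 : ℝ) b :=
    fun s hs => ⟨hs.1, lt_of_le_of_lt hs.2 ht₀b⟩
  -- bound on A on the compact interval
  have hAcont : ContinuousOn A (Set.Icc (0 : ℝ) t₀) :=
    fun s hs => (hA s (hsub hs)).continuousAt.continuousWithinAt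
  obtain ⟨K, hK⟩ := (isCompact_Icc (a := (0:ℝ)) (b := t₀)).exists_bound_of_continuousOn hAcont
  -- the function W = J' + A J satisfies W' = A W, W 0 = 0
  set W : ℝ → (V →L[ℝ] V) := fun s => J' s + A s * J s with hWdef
  have hWd : ∀ s ∈ Set.Icc (0 : ℝ) t₀, HasDerivAt W (A s * W s) s := by
    intro s hs
    have h1 := (hA s (hsub hs)).mul (hJd s (hsub hs))
    have h2 : HasDerivAt W (-(c • J s) + ((A s * A s + c • (1 : V →L[ℝ] V)) * J s + A s * J' s)) s :=
      (hJdd s (hsub hs)).add h1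
    convert h2 using 1
    show A s * (J' s + A s * J s) = _
    have hsm : (c • (1 : V →L[ℝ] V)) * J s = c • J s := by ext x; simp
    rw [add_mul, hsm, mul_assoc, mul_add]
    abel
  have hWbnd : ∀ s ∈ Set.Icc (0 : ℝ) t₀, ‖A s * W s‖ ≤ K * ‖W s‖ := by
    intro s hs
    calc ‖A s * W s‖ ≤ ‖A s‖ * ‖W s‖ := norm_mul_le _ _
    _ ≤ K * ‖W s‖ := mul_le_mul_of_nonneg_right (hK s hs) (norm_nonneg _)
  have hW0 : W 0 = 0 := by simp [hWdef, hJ'0, hJ0, hA0]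
  have hW : ∀ s ∈ Set.Icc (0 : ℝ) t₀, W s = 0 := gronwall_zero' hWd hWbnd hW0
  have hJ'eq : ∀ s ∈ Set.Icc (0 : ℝ) t₀, J' s = -(A s * J s) := by
    intro s hs
    have h := hW s hs
    simp only [hWdef] at h
    exact eq_neg_of_add_eq_zero_left h
  -- injectivity of J t₀ by backwards Grönwall
  have hinj : Function.Injective (J t₀) := by
    have hker : ∀ v : V, J t₀ v = 0 → v = 0 := by
      intro v hv
      set h : ℝ → V := fun s => J (t₀ - s) v with hhdef
      have hmem : ∀ s ∈ Set.Icc (0 : ℝ) t₀, t₀ - s ∈ Set.Icc (0 : ℝ) t₀ := by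
        intro s hs; constructor <;> [linarith [hs.2]; linarith [hs.1]]
      have hud : ∀ s ∈ Set.Icc (0 : ℝ) t₀, HasDerivAt (fun r => J r v) (J' s v) s := by
        intro s hs
        have := (hJd s (hsub hs)).clm_apply (hasDerivAt_const s v)
        simpa using this
      have hhd : ∀ s ∈ Set.Icc (0 : ℝ) t₀, HasDerivAt h (-(J' (t₀ - s) v)) s := by
        intro s hs
        have hlin : HasDerivAt (fun r : ℝ => t₀ - r) (-1 : ℝ) s := by
          simpa using (hasDerivAt_id s).const_sub t₀
        have := (hud (t₀ - s) (hmem s hs)).scomp s hlin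
        simpa [hhdef, Function.comp_def] using this
      have hhbnd : ∀ s ∈ Set.Icc (0 : ℝ) t₀, ‖-(J' (t₀ - s) v)‖ ≤ K * ‖h s‖ := by
        intro s hs
        have hm := hmem s hs
        rw [norm_neg, hJ'eq _ hm]
        have : (-(A (t₀ - s) * J (t₀ - s))) v = -(A (t₀ - s) (J (t₀ - s) v)) := rfl
        rw [this, norm_neg]
        calc ‖A (t₀ - s) (J (t₀ - s) v)‖ ≤ ‖A (t₀ - s)‖ * ‖J (t₀ - s) v‖ :=
              (A (t₀ - s)).le_opNorm _
        _ ≤ K * ‖h s‖ := mul_le_mul_of_nonneg_right (hK _ hm) (norm_nonneg _)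
      have hh0 : h 0 = 0 := by simp [hhdef, hv]
      have := gronwall_zero' hhd hhbnd hh0 t₀ ⟨ht₀0, le_refl _⟩
      simpa [hhdef, hJ0] using this
    intro x y hxy
    have : J t₀ (x - y) = 0 := by rw [map_sub, hxy, sub_self]
    exact sub_eq_zero.mp (hker _ this)
  have hbij : Function.Bijective (J t₀) := by
    refine ⟨hinj, ?_⟩
    have := (LinearMap.injective_iff_surjective (f := (J t₀ : V →ₗ[ℝ] V))).mp hinj
    exact this
  have hunit : IsUnit (J t₀) := ContinuousLinearMap.isUnit_iff_bijective.mpr hbij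
  refine ⟨hunit, ?_⟩
  have hJ' : J' t₀ = -(A t₀ * J t₀) := hJ'eq t₀ ⟨ht₀0, le_refl _⟩
  rw [hJ', neg_neg, mul_assoc, Ring.mul_inverse_cancel _ hunit, mul_one]
end

section
/- Let S₀ be a symmetric endomorphism of a finite-dimensional real inner product space V and suppose S(t) = S₀·J(t)⁻¹ is symmetric for each t ∈ [0, b), where J(t) ∈ GL(V) for all t and J depends continuously on t with J(0) = I. If [0, b) contains a point t₁ with J(t₁) = −I, then the number of positive eigenvalues of S₀ equals the number of negative eigenvalues of S₀. -/
/-!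
The quadratic forms `v ↦ ⟪S v, v⟫` have lower semicontinuous positive and negative indices:
a subspace on which the form is positive definite stays so under small perturbations of `S`,
by compactness of its unit sphere. By Sylvester's law of inertia the two indices of a symmetric
`S` add up to its rank, and the rank of `S(t) = S₀ J(t)⁻¹` does not depend on `t`. Hence both
indices are locally constant, so constant on the connected interval `[0, t₁]`, and comparing
`S(0) = S₀` with `S(t₁) = -S₀` gives the claim.
-/

open scoped RealInnerProductSpace

/-- The number of positive eigenvalues of a symmetric endomorphism, expressed as
the maximal dimension of a subspace on which the associated quadratic form is
positive definite. -/
noncomputable def posIndex {V : Type*} [NormedAddCommGroup V]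
    [InnerProductSpace ℝ V] [FiniteDimensional ℝ V] (T : V →ₗ[ℝ] V) : ℕ :=
  sSup {d | ∃ W : Submodule ℝ V, Module.finrank ℝ W = d ∧
    ∀ v ∈ W, v ≠ 0 → 0 < ⟪T v, v⟫}

/-- The number of negative eigenvalues of a symmetric endomorphism. -/
noncomputable def negIndex {V : Type*} [NormedAddCommGroup V]
    [InnerProductSpace ℝ V] [FiniteDimensional ℝ V] (T : V →ₗ[ℝ] V) : ℕ :=
  sSup {d | ∃ W : Submodule ℝ V, Module.finrank ℝ W = d ∧
    ∀ v ∈ W, v ≠ 0 → ⟪T v, v⟫ < 0}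

open scoped Topology
open Module LinearMap

section QuadForm

variable {V : Type*} [NormedAddCommGroup V] [InnerProductSpace ℝ V]

noncomputable def quadForm (T : V →ₗ[ℝ] V) : QuadraticForm ℝ V :=
  BilinMap.toQuadraticMap ((innerₗ V).comp T)

@[simp]
lemma quadForm_apply (T : V →ₗ[ℝ] V) (v : V) : quadForm T v = ⟪T v, v⟫ := rfl

lemma quadForm_neg (T : V →ₗ[ℝ] V) : quadForm (-T) = -quadForm T := by
  ext v
  simp

lemma LinearMap.IsSymmetric.radical_quadForm {T : V →ₗ[ℝ] V} (hT : T.IsSymmetric) :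
    (quadForm T).radical = ker T := by
  have hpolar : ∀ x y, QuadraticMap.polarBilin (quadForm T) x y = 2 * ⟪T x, y⟫ := by
    intro x y
    rw [QuadraticMap.polarBilin_apply_apply, quadForm, BilinMap.polar_toQuadraticMap]
    simp [hT y x, real_inner_comm y (T x), two_mul]
  ext x
  refine ⟨fun hx => ?_, fun hx => ⟨by simp [mem_ker.1 hx], ?_⟩⟩
  · have h := LinearMap.congr_fun hx.2 (T x)
    rw [hpolar, LinearMap.zero_apply, mul_eq_zero, inner_self_eq_zero] at h
    exact mem_ker.2 (h.resolve_left two_ne_zero)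
  · ext y
    simp [hpolar, mem_ker.1 hx]

variable [FiniteDimensional ℝ V]

lemma sSup_finrank_posDef_eq_sigPos (Q : QuadraticForm ℝ V) :
    sSup {d | ∃ W : Submodule ℝ V, finrank ℝ W = d ∧ ∀ v ∈ W, v ≠ 0 → 0 < Q v} = sigPos Q := by
  refine IsGreatest.csSup_eq ?_
  simpa [QuadraticMap.PosDef] using sigPos_isGreatest Q

lemma posIndex_eq_sigPos (T : V →ₗ[ℝ] V) : posIndex T = sigPos (quadForm T) :=
  sSup_finrank_posDef_eq_sigPos (quadForm T)

lemma negIndex_eq_sigNeg (T : V →ₗ[ℝ] V) : negIndex T = sigNeg (quadForm T) := by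
  rw [← sigPos_neg, ← sSup_finrank_posDef_eq_sigPos, negIndex]
  simp

lemma LinearMap.IsSymmetric.sigPos_add_sigNeg {T : V →ₗ[ℝ] V} (hT : T.IsSymmetric) :
    sigPos (quadForm T) + sigNeg (quadForm T) = finrank ℝ (range T) := by
  have := QuadraticForm.sigPos_add_sigNeg_add_radical (Q := quadForm T)
  rw [hT.radical_quadForm, ← finrank_range_add_finrank_ker T] at this
  omega

lemma eventually_posDef_restrict_quadForm {T : V →L[ℝ] V} {W : Submodule ℝ V}
    (hT : ((quadForm (T : V →ₗ[ℝ] V)).restrict W).PosDef) :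
    ∀ᶠ T' : V →L[ℝ] V in 𝓝 T, ((quadForm (T' : V →ₗ[ℝ] V)).restrict W).PosDef := by
  set K := (W : Set V) ∩ Metric.sphere 0 1
  have hK : IsCompact K := (isCompact_sphere 0 1).inter_left W.closed_of_finiteDimensional
  have hcont : Continuous fun p : (V →L[ℝ] V) × V => ⟪p.1 p.2, p.2⟫ :=
    (continuous_fst.clm_apply continuous_snd).inner continuous_snd
  have hK_pos : ∀ᶠ T' : V →L[ℝ] V in 𝓝 T, ∀ v ∈ K, 0 < ⟪T' v, v⟫ := by
    refine hK.eventually_forall_of_forall_eventually fun v hv => ?_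
    have hv0 : v ≠ 0 := ne_zero_of_mem_sphere one_ne_zero ⟨v, hv.2⟩
    exact (hcont.tendsto (T, v)).eventually_const_lt (hT ⟨v, hv.1⟩ (by simpa using hv0))
  filter_upwards [hK_pos] with T' hT' x hx
  have hx0 : (x : V) ≠ 0 := by simpa using hx
  have h := hT' (‖(x : V)‖⁻¹ • (x : V)) ⟨W.smul_mem _ x.2, by simp [norm_smul, hx0]⟩
  rw [map_smul, real_inner_smul_left, real_inner_smul_right] at h
  have hn : 0 < ‖(x : V)‖⁻¹ := by positivity
  simpa using (mul_pos_iff_of_pos_left hn).1 ((mul_pos_iff_of_pos_left hn).1 h)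

lemma eventually_sigPos_quadForm_le (T : V →L[ℝ] V) :
    ∀ᶠ T' : V →L[ℝ] V in 𝓝 T,
      sigPos (quadForm (T : V →ₗ[ℝ] V)) ≤ sigPos (quadForm (T' : V →ₗ[ℝ] V)) := by
  obtain ⟨W, hW, hpos⟩ := exists_finrank_eq_sigPos_and_posDef (quadForm (T : V →ₗ[ℝ] V))
  filter_upwards [eventually_posDef_restrict_quadForm hpos] with T' hT'
  exact hW ▸ le_sigPos_of_posDef _ hT'

lemma eventually_sigNeg_quadForm_le (T : V →L[ℝ] V) :
    ∀ᶠ T' : V →L[ℝ] V in 𝓝 T,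
      sigNeg (quadForm (T : V →ₗ[ℝ] V)) ≤ sigNeg (quadForm (T' : V →ₗ[ℝ] V)) := by
  filter_upwards [(continuous_neg.tendsto T).eventually (eventually_sigPos_quadForm_le (-T))]
    with T' h
  simpa [quadForm_neg] using h

theorem sigPos_quadForm_eq_of_preconnectedSpace {X : Type*} [TopologicalSpace X]
    [PreconnectedSpace X] {S : X → V →L[ℝ] V} (hS : Continuous S)
    (hsymm : ∀ x, (S x : V →ₗ[ℝ] V).IsSymmetric)
    (hrank : ∀ x y, finrank ℝ (range (S x : V →ₗ[ℝ] V)) = finrank ℝ (range (S y : V →ₗ[ℝ] V)))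
    (x y : X) : sigPos (quadForm (S x : V →ₗ[ℝ] V)) = sigPos (quadForm (S y : V →ₗ[ℝ] V)) := by
  refine IsLocallyConstant.apply_eq_of_preconnectedSpace
    ((IsLocallyConstant.iff_eventually_eq fun x => sigPos (quadForm (S x : V →ₗ[ℝ] V))).2
      fun x₀ => ?_) x y
  filter_upwards [hS.continuousAt.eventually (eventually_sigPos_quadForm_le (S x₀)),
    hS.continuousAt.eventually (eventually_sigNeg_quadForm_le (S x₀))] with x hpos hneg
  have := (hsymm x).sigPos_add_sigNeg
  have := (hsymm x₀).sigPos_add_sigNeg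
  have := hrank x x₀
  omega

end QuadForm

lemma Ring.inverse_neg_one {R : Type*} [Ring R] : Ring.inverse (-1 : R) = -1 := by
  simpa using Ring.inverse_unit (-1 : Rˣ)

lemma ContinuousLinearMap.range_mul_inverse {𝕜 E : Type*} [NontriviallyNormedField 𝕜]
    [NormedAddCommGroup E] [NormedSpace 𝕜 E] (A : E →L[𝕜] E) {B : E →L[𝕜] E} (hB : IsUnit B) :
    range ((A * Ring.inverse B : E →L[𝕜] E) : E →ₗ[𝕜] E) = range (A : E →ₗ[𝕜] E) := by
  obtain ⟨u, rfl⟩ := hB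
  rw [Ring.inverse_unit]
  refine range_comp_of_range_eq_top _ (range_eq_top.2 fun x => ⟨(u : E →L[𝕜] E) x, ?_⟩)
  show ((u⁻¹ * u : (E →L[𝕜] E)ˣ) : E →L[𝕜] E) x = x
  simp

theorem stmt_8_general {V : Type*} [NormedAddCommGroup V] [InnerProductSpace ℝ V]
    [FiniteDimensional ℝ V]
    (b : ℝ) (S₀ : V →L[ℝ] V) (J : ℝ → (V →L[ℝ] V))
    (hJcont : Continuous J) (hJ0 : J 0 = 1)
    (hJinv : ∀ t ∈ Set.Ico (0 : ℝ) b, IsUnit (J t))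
    (hsymm : ∀ t ∈ Set.Ico (0 : ℝ) b,
      LinearMap.IsSymmetric ((S₀ * Ring.inverse (J t) : V →L[ℝ] V) : V →ₗ[ℝ] V))
    (t₁ : ℝ) (ht₁ : t₁ ∈ Set.Ico (0 : ℝ) b) (hJt₁ : J t₁ = -1) :
    posIndex (S₀ : V →ₗ[ℝ] V) = negIndex (S₀ : V →ₗ[ℝ] V) := by
  set S : ℝ → V →L[ℝ] V := fun t => S₀ * Ring.inverse (J t)
  have hIcc : Set.Icc 0 t₁ ⊆ Set.Ico 0 b := Set.Icc_subset_Ico_right ht₁.2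
  have hS : ContinuousOn S (Set.Icc 0 t₁) := fun t ht => by
    obtain ⟨u, hu⟩ := hJinv t (hIcc ht)
    have hinv : ContinuousAt Ring.inverse (J t) := hu ▸ NormedRing.inverse_continuousAt u
    exact (continuousAt_const.mul (hinv.comp hJcont.continuousAt)).continuousWithinAt
  have := Subtype.preconnectedSpace (isPreconnected_Icc (a := (0 : ℝ)) (b := t₁))
  have key := sigPos_quadForm_eq_of_preconnectedSpace hS.domRestrict
    (fun t => hsymm t (hIcc t.2))
    (fun t s => by
      rw [Set.domRestrict_apply, Set.domRestrict_apply,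
        ContinuousLinearMap.range_mul_inverse S₀ (hJinv _ (hIcc t.2)),
        ContinuousLinearMap.range_mul_inverse S₀ (hJinv _ (hIcc s.2))])
    ⟨0, Set.left_mem_Icc.2 ht₁.1⟩ ⟨t₁, Set.right_mem_Icc.2 ht₁.1⟩
  simp only [Set.domRestrict_apply, S, hJ0, hJt₁, Ring.inverse_one, Ring.inverse_neg_one, mul_one,
    mul_neg_one, ContinuousLinearMap.toLinearMap_neg, quadForm_neg, sigPos_neg] at key
  rw [posIndex_eq_sigPos, negIndex_eq_sigNeg, key]

/-- if `S(t) = S₀·J(t)⁻¹` is symmetric for a continuous family of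
invertible operators `J` with `J(0) = I`, and `J(t₁) = −I` for some `t₁ ∈ [0, b)`,
then `S₀` has equally many positive and negative eigenvalues. -/
theorem stmt_8 {V : Type*} [NormedAddCommGroup V] [InnerProductSpace ℝ V]
    [FiniteDimensional ℝ V]
    (b : ℝ) (S₀ : V →L[ℝ] V) (J : ℝ → (V →L[ℝ] V))
    (hS₀ : LinearMap.IsSymmetric (S₀ : V →ₗ[ℝ] V))
    (hJcont : Continuous J) (hJ0 : J 0 = 1)
    (hJinv : ∀ t ∈ Set.Ico (0 : ℝ) b, IsUnit (J t))
    (hsymm : ∀ t ∈ Set.Ico (0 : ℝ) b,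
      LinearMap.IsSymmetric ((S₀ * Ring.inverse (J t) : V →L[ℝ] V) : V →ₗ[ℝ] V))
    (t₁ : ℝ) (ht₁ : t₁ ∈ Set.Ico (0 : ℝ) b) (hJt₁ : J t₁ = -1) :
    posIndex (S₀ : V →ₗ[ℝ] V) = negIndex (S₀ : V →ₗ[ℝ] V) :=
  stmt_8_general b S₀ J hJcont hJ0 hJinv hsymm t₁ ht₁ hJt₁
end

section
/- Let c < 0, A₀ ∈ End(V), and J(t) = cosh(√(−c) t)·I − (sinh(√(−c) t)/√(−c))·A₀, assumed invertible for all t ≥ 0. If √(−c) is not an eigenvalue of A₀, then for every v ∈ V, ‖J(t)⁻¹ v‖ → 0 as t → ∞; consequently S₀·J(t)⁻¹ → 0 in operator norm for any fixed S₀ ∈ End(V). -/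
open Filter Topology

set_option maxHeartbeats 1000000 in
set_option synthInstance.maxHeartbeats 1000000 in
/-- for `c < 0` and `J(t) = cosh(√(−c) t)·I − (sinh(√(−c) t)/√(−c))·A₀`
invertible for all `t ≥ 0`, if `√(−c)` is not an eigenvalue of `A₀` then
`J(t)⁻¹ v → 0` for every `v` and `S₀·J(t)⁻¹ → 0` in operator norm. -/
theorem stmt_9 {V : Type*} [NormedAddCommGroup V] [NormedSpace ℝ V]
    [FiniteDimensional ℝ V]
    (c : ℝ) (hc : c < 0) (A₀ : V →L[ℝ] V) (J : ℝ → (V →L[ℝ] V))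
    (hJdef : ∀ t : ℝ, J t =
      Real.cosh (Real.sqrt (-c) * t) • (1 : V →L[ℝ] V)
        - (Real.sinh (Real.sqrt (-c) * t) / Real.sqrt (-c)) • A₀)
    (hJinv : ∀ t ∈ Set.Ici (0 : ℝ), IsUnit (J t))
    (heig : ¬ Module.End.HasEigenvalue (A₀ : V →ₗ[ℝ] V) (Real.sqrt (-c))) :
    (∀ v : V, Tendsto (fun t => ‖(Ring.inverse (J t)) v‖) atTop (𝓝 0)) ∧
      ∀ S₀ : V →L[ℝ] V,
        Tendsto (fun t => ‖S₀ * Ring.inverse (J t)‖) atTop (𝓝 0) := by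
  set s := Real.sqrt (-c) with hsdef
  have hs : 0 < s := Real.sqrt_pos.mpr (by linarith)
  set B : V →L[ℝ] V := 1 - s⁻¹ • A₀ with hBdef
  -- eigenspace is trivial
  have heig' : Module.End.eigenspace (A₀ : V →ₗ[ℝ] V) s = ⊥ := by
    rw [Module.End.hasEigenvalue_iff, not_not] at heig; exact heig
  -- B is injective
  have hBinj : Function.Injective B := by
    rw [injective_iff_map_eq_zero]
    intro x hx
    have hx' : A₀ x = s • x := by
      have h1 : x - s⁻¹ • A₀ x = 0 := by
        simpa [hBdef] using hx
      have h2 : s⁻¹ • A₀ x = x := by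
        rwa [sub_eq_zero, eq_comm] at h1
      calc A₀ x = s • s⁻¹ • A₀ x := by rw [smul_smul, mul_inv_cancel₀ hs.ne', one_smul]
        _ = s • x := by rw [h2]
    have : x ∈ Module.End.eigenspace (A₀ : V →ₗ[ℝ] V) s :=
      Module.End.mem_eigenspace_iff.mpr hx'
    rw [heig'] at this
    simpa using this
  -- B is a unit
  have hBunit : IsUnit B := by
    let e : V ≃ₗ[ℝ] V := LinearEquiv.ofInjectiveEndo (B : V →ₗ[ℝ] V) hBinj
    let e' : V ≃L[ℝ] V := e.toContinuousLinearEquiv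
    have hcoe : ∀ y, e' y = B y := fun y => congrFun (LinearEquiv.coe_ofInjectiveEndo _ hBinj) y
    refine ⟨⟨B, (e'.symm : V →L[ℝ] V), ?_, ?_⟩, rfl⟩
    · ext x
      simp only [ContinuousLinearMap.coe_mul, Function.comp_apply,
        ContinuousLinearMap.one_apply, ContinuousLinearEquiv.coe_coe]
      simp only [ContinuousLinearMap.mul_apply, ContinuousLinearEquiv.coe_coe]
      rw [← hcoe]
      exact e'.apply_symm_apply x
    · ext x
      simp only [ContinuousLinearMap.coe_mul, Function.comp_apply,
        ContinuousLinearMap.one_apply, ContinuousLinearEquiv.coe_coe]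
      simp only [ContinuousLinearMap.mul_apply, ContinuousLinearEquiv.coe_coe]
      rw [← hcoe]
      exact e'.symm_apply_apply x
  -- auxiliary family K
  set C : V →L[ℝ] V := 1 + s⁻¹ • A₀ with hCdef
  set K : ℝ → (V →L[ℝ] V) := fun t => B + Real.exp (-(2 * (s * t))) • C with hKdef
  -- J t = (exp (s*t) / 2) • K t
  have hJK : ∀ t : ℝ, J t = (Real.exp (s * t) / 2) • K t := by
    intro t
    have hcoef : Real.exp (s * t) / 2 * Real.exp (-(2 * (s * t)))
        = Real.exp (-(s * t)) / 2 := by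
      rw [div_mul_eq_mul_div, ← Real.exp_add]
      congr 2
      ring
    rw [hJdef t, hKdef]
    simp only
    rw [smul_add, smul_smul, hcoef, hBdef, hCdef, Real.cosh_eq, Real.sinh_eq]
    ext x
    simp only [ContinuousLinearMap.add_apply, ContinuousLinearMap.sub_apply,
      ContinuousLinearMap.smul_apply, ContinuousLinearMap.one_apply]
    match_scalars <;> ring
  -- K tends to B
  have hKtend : Tendsto K atTop (𝓝 B) := by
    have h0 : Tendsto (fun t : ℝ => Real.exp (-(2 * (s * t)))) atTop (𝓝 0) := by
      apply Real.tendsto_exp_atBot.comp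
      apply tendsto_neg_atBot_iff.mpr
      exact (tendsto_const_mul_atTop_of_pos (by positivity)).mpr
        ((tendsto_const_mul_atTop_of_pos hs).mpr tendsto_id)
    have := (h0.smul_const C).const_add B
    simpa using this
  -- Ring.inverse of K tends to Ring.inverse of B
  have hKinvtend : Tendsto (fun t => Ring.inverse (K t)) atTop (𝓝 (Ring.inverse B)) :=
    (NormedRing.inverse_continuousAt hBunit.unit).tendsto.comp
      (by simpa [hBunit.unit_spec] using hKtend)
  -- for t ≥ 0, K t is a unit and Ring.inverse (J t) is a scaled inverse of K
  have key : ∀ t ∈ Set.Ici (0 : ℝ),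
      Ring.inverse (J t) = (2 * Real.exp (-(s * t))) • Ring.inverse (K t) := by
    intro t ht
    have hne : Real.exp (s * t) / 2 ≠ 0 := by positivity
    have hKunit : IsUnit (K t) := by
      have : K t = (Real.exp (s * t) / 2)⁻¹ • J t := by
        rw [hJK t, smul_smul, inv_mul_cancel₀ hne, one_smul]
      rw [this]
      obtain ⟨u, hu⟩ := hJinv t ht
      exact ⟨⟨(Real.exp (s * t) / 2)⁻¹ • J t, (Real.exp (s * t) / 2) • ↑u⁻¹,
        by rw [smul_mul_smul_comm, inv_mul_cancel₀ hne, one_smul, ← hu, u.mul_inv],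
        by rw [smul_mul_smul_comm, mul_inv_cancel₀ hne, one_smul, ← hu, u.inv_mul]⟩, rfl⟩
    obtain ⟨w, hw⟩ := hJinv t ht
    rw [← hw, Ring.inverse_unit]
    refine Units.inv_eq_of_mul_eq_one_right ?_
    rw [hw, hJK t, smul_mul_smul_comm, Ring.mul_inverse_cancel _ hKunit]
    have : Real.exp (s * t) / 2 * (2 * Real.exp (-(s * t))) = 1 := by
      rw [div_mul_eq_mul_div, mul_comm (2 : ℝ), ← mul_assoc, ← Real.exp_add]
      simp
    rw [this, one_smul]
  -- Ring.inverse (J t) tends to 0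
  have hmain : Tendsto (fun t => Ring.inverse (J t)) atTop (𝓝 0) := by
    have h0 : Tendsto (fun t : ℝ => 2 * Real.exp (-(s * t))) atTop (𝓝 0) := by
      have : Tendsto (fun t : ℝ => Real.exp (-(s * t))) atTop (𝓝 0) := by
        apply Real.tendsto_exp_atBot.comp
        apply tendsto_neg_atBot_iff.mpr
        exact (tendsto_const_mul_atTop_of_pos hs).mpr tendsto_id
      simpa using this.const_mul 2
    have := h0.smul hKinvtend
    rw [zero_smul] at this
    refine this.congr' ?_
    filter_upwards [eventually_ge_atTop (0 : ℝ)] with t ht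
    exact (key t ht).symm
  constructor
  · intro v
    have : Tendsto (fun t => (Ring.inverse (J t)) v) atTop (𝓝 0) := by
      have hcont := (ContinuousLinearMap.apply ℝ V v).continuous.tendsto (0 : V →L[ℝ] V)
      simpa [Function.comp_def] using hcont.comp hmain
    simpa using this.norm
  · intro S₀
    have : Tendsto (fun t => S₀ * Ring.inverse (J t)) atTop (𝓝 0) := by
      have := (tendsto_const_nhds (x := S₀)).mul hmain
      simpa using this
    simpa using this.norm
end

section
/- Let c < 0, A₀ ∈ End(V) with J(t) = cosh(√(−c)t)·I − (sinh(√(−c)t)/√(−c))·A₀ invertible for all t ∈ ℝ. If √(−c) is not an eigenvalue of A₀ or −√(−c) is not an eigenvalue of A₀, then S₀·J(t)⁻¹ → 0 as t → +∞ or t → −∞, respectively, for any S₀ ∈ End(V). In particular, if ‖S₀·J(t)⁻¹‖ ≥ ε > 0 for all t ∈ ℝ, then both √(−c) and −√(−c) are eigenvalues of A₀. -/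
/-!
With `a = √(-c)`, `J t = (e^{at}/2) • (1 - a⁻¹ • A₀) + (e^{-at}/2) • (1 + a⁻¹ • A₀)`.
If `a` is not an eigenvalue, `B = 1 - a⁻¹ • A₀` is invertible, and
`J t = (e^{at}/2) • (B + e^{-2at} • C)` with `C = 1 + a⁻¹ • A₀`;
since inversion is continuous at `B`, `(J t)⁻¹ ≈ 2 e^{-at} • B⁻¹ → 0`.
Reversing time exchanges the roles of `a` and `-a`.
-/

open Filter Topology

theorem Ring.inverse_smul {𝕜 R : Type*} [Field 𝕜] [Ring R] [Algebra 𝕜 R] {s : 𝕜} (hs : s ≠ 0)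
    (x : R) : Ring.inverse (s • x) = s⁻¹ • Ring.inverse x := by
  have hu : IsUnit (algebraMap 𝕜 R s) := (isUnit_iff_ne_zero.2 hs).map _
  have hinv : Ring.inverse (algebraMap 𝕜 R s) = algebraMap 𝕜 R s⁻¹ := by
    simpa using (Ring.inverse_mul_eq_iff_eq_mul _ 1 _ hu).2
      (by rw [← map_mul, mul_inv_cancel₀ hs, map_one])
  rw [Algebra.smul_def, Ring.inverse_mul (.inl hu), hinv, ← Algebra.commutes, Algebra.smul_def]

theorem ContinuousLinearMap.isUnit_one_sub_inv_smul_of_not_hasEigenvalue {𝕜 E : Type*}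
    [NontriviallyNormedField 𝕜] [NormedAddCommGroup E] [NormedSpace 𝕜 E] [CompleteSpace E]
    [FiniteDimensional 𝕜 E] (A : E →L[𝕜] E) {μ : 𝕜} (hμ : μ ≠ 0)
    (h : ¬ Module.End.HasEigenvalue (A : E →ₗ[𝕜] E) μ) : IsUnit (1 - μ⁻¹ • A) := by
  rw [Module.End.hasEigenvalue_iff_mem_spectrum, ← ContinuousLinearMap.spectrum_eq,
    spectrum.notMem_iff] at h
  have hμ' := (isUnit_iff_ne_zero.2 (inv_ne_zero hμ)).map (algebraMap 𝕜 (E →L[𝕜] E))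
  convert hμ'.mul h using 1
  rw [mul_sub, ← map_mul, inv_mul_cancel₀ hμ, map_one, ← Algebra.smul_def]

theorem cosh_smul_sub_sinh_div_smul {M : Type*} [AddCommGroup M] [Module ℝ M] (a t : ℝ)
    (x y : M) :
    Real.cosh (a * t) • x - (Real.sinh (a * t) / a) • y =
      (Real.exp (a * t) / 2) • (x - a⁻¹ • y) + (Real.exp (-(a * t)) / 2) • (x - (-a)⁻¹ • y) := by
  rw [Real.cosh_eq, Real.sinh_eq]
  match_scalars <;> ring

theorem tendsto_inverse_smul_add_smul {α R : Type*} [NormedRing R] [NormedAlgebra ℝ R]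
    [CompleteSpace R] {B : R} (hB : IsUnit B) (C : R) {l : Filter α} {f g : α → ℝ}
    (hf : Tendsto f l atTop) (hgf : Tendsto (fun t => g t / f t) l (𝓝 0)) :
    Tendsto (fun t => Ring.inverse (f t • B + g t • C)) l (𝓝 0) := by
  have hnear : Tendsto (fun t => B + (g t / f t) • C) l (𝓝 B) := by
    simpa using tendsto_const_nhds.add (hgf.smul_const C)
  have hinv : Tendsto (fun t => Ring.inverse (B + (g t / f t) • C)) l (𝓝 (Ring.inverse B)) :=
    (NormedRing.inverse_continuousAt hB.unit).tendsto.comp hnear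
  have := hf.inv_tendsto_atTop.smul hinv
  rw [zero_smul] at this
  refine this.congr' ?_
  filter_upwards [hf.eventually_gt_atTop 0] with t ht
  rw [Pi.inv_apply, ← Ring.inverse_smul ht.ne', smul_add, smul_smul, mul_div_cancel₀ _ ht.ne']

theorem tendsto_inverse_exp_smul_add_exp_neg_smul {α R : Type*} [NormedRing R]
    [NormedAlgebra ℝ R] [CompleteSpace R] {B : R} (hB : IsUnit B) (C : R) {l : Filter α}
    {u : α → ℝ} (hu : Tendsto u l atTop) :
    Tendsto (fun t => Ring.inverse ((Real.exp (u t) / 2) • B + (Real.exp (-u t) / 2) • C)) l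
      (𝓝 0) := by
  refine tendsto_inverse_smul_add_smul hB C
    ((Real.tendsto_exp_atTop.comp hu).atTop_div_const two_pos) ?_
  have : Tendsto (fun t => Real.exp (-2 * u t)) l (𝓝 0) :=
    Real.tendsto_exp_atBot.comp (hu.const_mul_atTop_of_neg (by norm_num))
  refine this.congr fun t => ?_
  rw [div_div_div_cancel_right₀ two_ne_zero, ← Real.exp_sub]
  ring_nf

theorem stmt_17_general {V : Type*} [NormedAddCommGroup V] [NormedSpace ℝ V]
    [FiniteDimensional ℝ V]
    (c : ℝ) (hc : c < 0) (A₀ : V →L[ℝ] V) (J : ℝ → (V →L[ℝ] V))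
    (hJdef : ∀ t : ℝ, J t =
      Real.cosh (Real.sqrt (-c) * t) • (1 : V →L[ℝ] V)
        - (Real.sinh (Real.sqrt (-c) * t) / Real.sqrt (-c)) • A₀) :
    (¬ Module.End.HasEigenvalue (A₀ : V →ₗ[ℝ] V) (Real.sqrt (-c)) →
      ∀ S₀ : V →L[ℝ] V,
        Tendsto (fun t => ‖S₀ * Ring.inverse (J t)‖) atTop (𝓝 0)) ∧
    (¬ Module.End.HasEigenvalue (A₀ : V →ₗ[ℝ] V) (-Real.sqrt (-c)) →
      ∀ S₀ : V →L[ℝ] V,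
        Tendsto (fun t => ‖S₀ * Ring.inverse (J t)‖) atBot (𝓝 0)) ∧
    (∀ (S₀ : V →L[ℝ] V) (ε : ℝ), 0 < ε →
      (∀ t : ℝ, ε ≤ ‖S₀ * Ring.inverse (J t)‖) →
      Module.End.HasEigenvalue (A₀ : V →ₗ[ℝ] V) (Real.sqrt (-c)) ∧
        Module.End.HasEigenvalue (A₀ : V →ₗ[ℝ] V) (-Real.sqrt (-c))) := by
  set a := Real.sqrt (-c)
  have ha : 0 < a := Real.sqrt_pos.2 (neg_pos.2 hc)
  have hJ (t : ℝ) : J t = (Real.exp (a * t) / 2) • (1 - a⁻¹ • A₀)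
      + (Real.exp (-(a * t)) / 2) • (1 - (-a)⁻¹ • A₀) :=
    (hJdef t).trans (cosh_smul_sub_sinh_div_smul a t 1 A₀)
  have hatTop : ¬ Module.End.HasEigenvalue (A₀ : V →ₗ[ℝ] V) a → ∀ S₀ : V →L[ℝ] V,
      Tendsto (fun t => ‖S₀ * Ring.inverse (J t)‖) atTop (𝓝 0) := fun h S₀ => by
    have hu : Tendsto (fun t => a * t) atTop atTop := tendsto_id.const_mul_atTop ha
    have := (tendsto_inverse_exp_smul_add_exp_neg_smul
      (A₀.isUnit_one_sub_inv_smul_of_not_hasEigenvalue ha.ne' h)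
      (1 - (-a)⁻¹ • A₀) hu).const_mul S₀
    rw [mul_zero] at this
    refine (tendsto_zero_iff_norm_tendsto_zero.1 this).congr fun t => ?_
    rw [hJ]
  have hatBot : ¬ Module.End.HasEigenvalue (A₀ : V →ₗ[ℝ] V) (-a) → ∀ S₀ : V →L[ℝ] V,
      Tendsto (fun t => ‖S₀ * Ring.inverse (J t)‖) atBot (𝓝 0) := fun h S₀ => by
    have hu : Tendsto (fun t => -(a * t)) atBot atTop :=
      tendsto_neg_atBot_atTop.comp (tendsto_id.const_mul_atBot ha)
    have := (tendsto_inverse_exp_smul_add_exp_neg_smul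
      (A₀.isUnit_one_sub_inv_smul_of_not_hasEigenvalue (neg_ne_zero.2 ha.ne') h)
      (1 - a⁻¹ • A₀) hu).const_mul S₀
    rw [mul_zero] at this
    refine (tendsto_zero_iff_norm_tendsto_zero.1 this).congr fun t => ?_
    rw [hJ, neg_neg, add_comm]
  refine ⟨hatTop, hatBot, fun S₀ ε hε hbd => ⟨?_, ?_⟩⟩ <;> by_contra h
  · exact hε.not_ge (ge_of_tendsto' (hatTop h S₀) hbd)
  · exact hε.not_ge (ge_of_tendsto' (hatBot h S₀) hbd)

/-- for `c < 0` and the Jacobi operator `J` invertible on all of `ℝ`,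
if `√(−c)` (resp. `−√(−c)`) is not an eigenvalue of `A₀` then `S₀·J(t)⁻¹ → 0` as
`t → +∞` (resp. `t → −∞`); hence if `‖S₀·J(t)⁻¹‖` is bounded away from zero, both
`±√(−c)` are eigenvalues of `A₀`. -/
theorem stmt_17 {V : Type*} [NormedAddCommGroup V] [NormedSpace ℝ V]
    [FiniteDimensional ℝ V]
    (c : ℝ) (hc : c < 0) (A₀ : V →L[ℝ] V) (J : ℝ → (V →L[ℝ] V))
    (hJdef : ∀ t : ℝ, J t =
      Real.cosh (Real.sqrt (-c) * t) • (1 : V →L[ℝ] V)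
        - (Real.sinh (Real.sqrt (-c) * t) / Real.sqrt (-c)) • A₀)
    (hJinv : ∀ t : ℝ, IsUnit (J t)) :
    (¬ Module.End.HasEigenvalue (A₀ : V →ₗ[ℝ] V) (Real.sqrt (-c)) →
      ∀ S₀ : V →L[ℝ] V,
        Tendsto (fun t => ‖S₀ * Ring.inverse (J t)‖) atTop (𝓝 0)) ∧
    (¬ Module.End.HasEigenvalue (A₀ : V →ₗ[ℝ] V) (-Real.sqrt (-c)) →
      ∀ S₀ : V →L[ℝ] V,
        Tendsto (fun t => ‖S₀ * Ring.inverse (J t)‖) atBot (𝓝 0)) ∧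
    (∀ (S₀ : V →L[ℝ] V) (ε : ℝ), 0 < ε →
      (∀ t : ℝ, ε ≤ ‖S₀ * Ring.inverse (J t)‖) →
      Module.End.HasEigenvalue (A₀ : V →ₗ[ℝ] V) (Real.sqrt (-c)) ∧
        Module.End.HasEigenvalue (A₀ : V →ₗ[ℝ] V) (-Real.sqrt (-c))) :=
  stmt_17_general c hc A₀ J hJdef
end

section
/- Let A : ℝ → End(V) be a solution of the Riccati equation A'(t) = A(t)² (c = 0 case) defined on all of ℝ, with A(0) symmetric with respect to an inner product on the finite-dimensional real vector space V. Then A(t) = 0 for all t. -/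
/-!
Differentiating shows that `E t = A t * (1 - t • A 0) - A 0` solves the linear equation
`E' = A E` with `E 0 = 0`, so by uniqueness `A t * (1 - t • A 0) = A 0` for all `t`. If
`A 0 v = μ v` with `μ ≠ 0`, evaluating at `t = μ⁻¹` kills the left side, so `A 0 v = 0` and
`v = 0`. Hence every eigenvalue of the symmetric operator `A 0` vanishes, so `A 0 = 0`, and the
identity becomes `A t = 0`.
-/

open Set

theorem eq_zero_of_hasDerivAt_mul_left {𝔸 : Type*} [NormedRing 𝔸] [NormedAlgebra ℝ 𝔸]
    {A E : ℝ → 𝔸} (hA : Continuous A) (hE : ∀ t, HasDerivAt E (A t * E t) t) {t₀ : ℝ}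
    (h₀ : E t₀ = 0) : E = 0 := by
  ext t
  obtain ⟨T, ht, ht₀⟩ : ∃ T, t ∈ Ioo (-T) T ∧ t₀ ∈ Ioo (-T) T :=
    ⟨max |t| |t₀| + 1, by grind [abs_lt], by grind [abs_lt]⟩
  obtain ⟨C, hC⟩ := isCompact_Icc.exists_bound_of_continuousOn (hA.continuousOn (s := Icc (-T) T))
  have hLip : ∀ s ∈ Ioo (-T) T, LipschitzOnWith C.toNNReal (fun X ↦ A s * X) univ := by
    refine fun s hs ↦ (LipschitzWith.of_dist_le_mul fun X Y ↦ ?_).lipschitzOnWith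
    rw [dist_eq_norm, dist_eq_norm, ← mul_sub, Real.coe_toNNReal']
    exact (norm_mul_le _ _).trans <| mul_le_mul_of_nonneg_right
      ((hC s (Ioo_subset_Icc_self hs)).trans (le_max_left _ _)) (norm_nonneg _)
  exact ODE_solution_unique_of_mem_Ioo hLip ht₀ (fun s _ ↦ ⟨hE s, mem_univ _⟩)
    (fun s _ ↦ ⟨by simp, mem_univ _⟩) h₀ ht

theorem riccati_mul_one_sub_smul_eq {𝔸 : Type*} [NormedRing 𝔸] [NormedAlgebra ℝ 𝔸]
    {A : ℝ → 𝔸} (hA : ∀ t, HasDerivAt A (A t * A t) t) (t : ℝ) :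
    A t * (1 - t • A 0) = A 0 := by
  set E : ℝ → 𝔸 := fun t ↦ A t * (1 - t • A 0) - A 0
  have hE : ∀ t, HasDerivAt E (A t * E t) t := fun t ↦ by
    refine (((hA t).fun_mul (((hasDerivAt_id t).smul_const (A 0)).const_sub 1)).sub_const
      (A 0)).congr_deriv ?_
    simp only [E, id, one_smul]
    noncomm_ring
  exact sub_eq_zero.1 <| congrFun (eq_zero_of_hasDerivAt_mul_left
    (continuous_iff_continuousAt.2 fun t ↦ (hA t).continuousAt) hE (t₀ := 0) (by simp [E])) t

theorem riccati_eigenvalue_eq_zero {V : Type*} [NormedAddCommGroup V] [NormedSpace ℝ V]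
    {A : ℝ → V →L[ℝ] V} (hA : ∀ t, HasDerivAt A (A t * A t) t) {μ : ℝ}
    (hμ : Module.End.HasEigenvalue (A 0 : V →ₗ[ℝ] V) μ) : μ = 0 := by
  by_contra hμ₀
  obtain ⟨v, hv⟩ := hμ.exists_hasEigenvector
  have hAv : A 0 v = μ • v := hv.apply_eq_smul
  have := congr($(riccati_mul_one_sub_smul_eq hA μ⁻¹) v)
  simp only [mul_apply_eq_comp, sub_apply, one_apply_eq_self, smul_apply, hAv, smul_smul,
    inv_mul_cancel₀ hμ₀, one_smul, sub_self, map_zero] at this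
  exact hv.2 ((smul_eq_zero.1 this.symm).resolve_left hμ₀)

/-- a globally defined solution `A : ℝ → End(V)` of the Riccati
equation `A' = A²` with `A(0)` symmetric vanishes identically. -/
theorem stmt_18 {V : Type*} [NormedAddCommGroup V] [InnerProductSpace ℝ V]
    [FiniteDimensional ℝ V]
    (A : ℝ → (V →L[ℝ] V))
    (hA : ∀ t : ℝ, HasDerivAt A (A t * A t) t)
    (hsym : LinearMap.IsSymmetric ((A 0 : V →L[ℝ] V) : V →ₗ[ℝ] V)) :
    ∀ t : ℝ, A t = 0 := by
  have hA₀ : A 0 = 0 := (ContinuousLinearMap.eq_zero_of_forall_hasEigenvalue_eq_zero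
    (isCompactOperator_of_locallyCompactSpace_dom _) hsym).1 fun _ ↦ riccati_eigenvalue_eq_zero hA
  intro t
  simpa [hA₀] using riccati_mul_one_sub_smul_eq hA t
end
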